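/- arXiv:2406.12642 — 4 statements merged into one kernel-verified Lean document; each statement's English description precedes it below -/
import Mathlib

section
/- Suppose λ = (λ_1,…,λ_N) ∈ ℝ^N satisfies the Sprindzhuk-type Diophantine property: there exist C > 0 and τ > 0 such that |λ_1 x_1 + ⋯ + λ_N x_N| ≥ C/|x|^{N-1+τ} for all nonzero x ∈ ℤ^N. Let a_i = λ_i^{-1/2} > 0 (assuming all λ_i > 0) and let k, l lie in the lattice (ℤ/a_1) × ⋯ × (ℤ/a_N) with 0 < |k|, |l| ≤ M (Euclidean norm) and |k| ≠ |l|. Then 1/||k| - |l|| ≤ C' (1+M)^{2N + 2τ - 1}, where C' depends only on a, N, τ. -/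
set_option maxHeartbeats 1000000


/-- Euclidean norm of an integer vector. -/
noncomputable def inorm {N : ℕ} (x : Fin N → ℤ) : ℝ :=
  Real.sqrt (∑ i, ((x i : ℝ)) ^ 2)

/-- Refined 2-wave small divisor estimate: if `λ ∈ ℝ^N` (all `λ_i > 0`) satisfies a
Sprindzhuk-type Diophantine property `|λ·x| ≥ C/|x|^{N-1+τ}` for all nonzero
`x ∈ ℤ^N`, and `a_i = λ_i^{-1/2}`, then there is `C' > 0` (depending only on
`a, N, τ`) such that for all lattice points `k, l ∈ (ℤ/a_1)×⋯×(ℤ/a_N)` with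
`0 < |k|, |l| ≤ M` and `|k| ≠ |l|`, one has
`1/||k|-|l|| ≤ C' (1+M)^{2N+2τ-1}`. -/
theorem stmt_3 (N : ℕ) (τ : ℝ) (hτ : 0 < τ)
    (lam : Fin N → ℝ) (hlam : ∀ i, 0 < lam i)
    (C : ℝ) (hC : 0 < C)
    (hdio : ∀ x : Fin N → ℤ, x ≠ 0 →
      C / (inorm x) ^ ((N : ℝ) - 1 + τ) ≤ |∑ i, lam i * (x i : ℝ)|)
    (a : Fin N → ℝ) (ha : ∀ i, a i = (lam i) ^ (-(1 : ℝ) / 2)) :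
    ∃ C' > 0, ∀ (M : ℝ) (k l : EuclideanSpace ℝ (Fin N)),
      (∀ i, ∃ n : ℤ, k i = n / a i) → (∀ i, ∃ n : ℤ, l i = n / a i) →
      0 < ‖k‖ → ‖k‖ ≤ M → 0 < ‖l‖ → ‖l‖ ≤ M → ‖k‖ ≠ ‖l‖ →
      1 / |‖k‖ - ‖l‖| ≤ C' * (1 + M) ^ (2 * (N : ℝ) + 2 * τ - 1) := by
  classical
  set S : ℝ := Real.sqrt (∑ i, ((lam i)⁻¹) ^ 2) with hS
  have hS0 : 0 ≤ S := Real.sqrt_nonneg _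
  set T : ℝ := 2 * S + 1 with hT
  have hT0 : 0 < T := by positivity
  set e : ℝ := (N : ℝ) - 1 + τ with he
  refine ⟨2 * T ^ e / C, by positivity, ?_⟩
  intro M k l hk hl hk0 hkM hl0 hlM hne
  choose n hn using hk
  choose m hm using hl
  set x : Fin N → ℤ := fun i => (n i) ^ 2 - (m i) ^ 2 with hx
  have hM0 : 0 < M := lt_of_lt_of_le hk0 hkM
  have h0M : (0:ℝ) < 1 + M := by linarith
  have hai : ∀ i, 0 < a i := fun i => by
    rw [ha]; exact Real.rpow_pos_of_pos (hlam i) _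
  have hasq : ∀ i, (a i) ^ 2 = (lam i)⁻¹ := by
    intro i
    rw [ha, ← Real.rpow_natCast (lam i ^ (-(1:ℝ)/2)) 2, ← Real.rpow_mul (hlam i).le]
    norm_num [Real.rpow_neg_one]
  have hksq : ∀ i, (k i) ^ 2 = lam i * ((n i : ℝ)) ^ 2 := by
    intro i
    rw [hn i, div_pow, hasq, div_inv_eq_mul]; ring
  have hlsq : ∀ i, (l i) ^ 2 = lam i * ((m i : ℝ)) ^ 2 := by
    intro i
    rw [hm i, div_pow, hasq, div_inv_eq_mul]; ring
  have hk2 : ‖k‖ ^ 2 = ∑ i, (k i) ^ 2 := by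
    rw [EuclideanSpace.norm_eq, Real.sq_sqrt (by positivity)]
    simp [Real.norm_eq_abs, sq_abs]
  have hl2 : ‖l‖ ^ 2 = ∑ i, (l i) ^ 2 := by
    rw [EuclideanSpace.norm_eq, Real.sq_sqrt (by positivity)]
    simp [Real.norm_eq_abs, sq_abs]
  have hdiff : ‖k‖ ^ 2 - ‖l‖ ^ 2 = ∑ i, lam i * ((x i : ℝ)) := by
    rw [hk2, hl2, ← Finset.sum_sub_distrib]
    apply Finset.sum_congr rfl
    intro i _
    rw [hksq i, hlsq i, hx]
    push_cast
    ring
  have hx0 : x ≠ 0 := by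
    intro h
    apply hne
    rw [h] at hdiff
    simp at hdiff
    nlinarith [norm_nonneg k, norm_nonneg l]
  have hN : 0 < N := by
    by_contra h
    push_neg at h
    apply hx0
    funext i
    exact absurd i.isLt (by omega)
  have he0 : 0 < e := by
    rw [he]
    have : (1:ℝ) ≤ N := by exact_mod_cast hN
    linarith
  -- positivity of inorm x
  have hix : 0 < inorm x := by
    obtain ⟨i, hi⟩ := Function.ne_iff.mp hx0
    apply Real.sqrt_pos.mpr
    refine Finset.sum_pos' (fun j _ => sq_nonneg _) ⟨i, Finset.mem_univ i, ?_⟩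
    have hxi : ((x i : ℝ)) ≠ 0 := Int.cast_ne_zero.mpr hi
    positivity
  -- coordinate bounds
  have hxi : ∀ i, ((x i : ℝ)) ^ 2 ≤ (2 * M ^ 2 * (lam i)⁻¹) ^ 2 := by
    intro i
    have hk1 : (k i) ^ 2 ≤ ‖k‖ ^ 2 := by
      rw [hk2]
      exact Finset.single_le_sum (f := fun j => (k j) ^ 2) (fun j _ => sq_nonneg _)
        (Finset.mem_univ i)
    have hl1 : (l i) ^ 2 ≤ ‖l‖ ^ 2 := by
      rw [hl2]
      exact Finset.single_le_sum (f := fun j => (l j) ^ 2) (fun j _ => sq_nonneg _)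
        (Finset.mem_univ i)
    have hkM2 : ‖k‖ ^ 2 ≤ M ^ 2 := by nlinarith [norm_nonneg k]
    have hlM2 : ‖l‖ ^ 2 ≤ M ^ 2 := by nlinarith [norm_nonneg l]
    have hlp := hlam i
    have hlip : (0:ℝ) < (lam i)⁻¹ := by positivity
    have hn2 : ((n i : ℝ)) ^ 2 ≤ M ^ 2 * (lam i)⁻¹ := by
      have h1 : lam i * ((n i : ℝ)) ^ 2 ≤ M ^ 2 := by
        rw [← hksq i]; linarith
      calc ((n i : ℝ)) ^ 2 = (lam i)⁻¹ * (lam i * ((n i : ℝ)) ^ 2) :=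
            (inv_mul_cancel_left₀ hlp.ne' _).symm
        _ ≤ (lam i)⁻¹ * M ^ 2 := mul_le_mul_of_nonneg_left h1 hlip.le
        _ = M ^ 2 * (lam i)⁻¹ := by ring
    have hm2 : ((m i : ℝ)) ^ 2 ≤ M ^ 2 * (lam i)⁻¹ := by
      have h1 : lam i * ((m i : ℝ)) ^ 2 ≤ M ^ 2 := by
        rw [← hlsq i]; linarith
      calc ((m i : ℝ)) ^ 2 = (lam i)⁻¹ * (lam i * ((m i : ℝ)) ^ 2) :=
            (inv_mul_cancel_left₀ hlp.ne' _).symm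
        _ ≤ (lam i)⁻¹ * M ^ 2 := mul_le_mul_of_nonneg_left h1 hlip.le
        _ = M ^ 2 * (lam i)⁻¹ := by ring
    have hcast : ((x i : ℝ)) = ((n i : ℝ)) ^ 2 - ((m i : ℝ)) ^ 2 := by
      rw [hx]; push_cast; ring
    rw [hcast]
    have hnn := sq_nonneg ((n i : ℝ))
    have hmm := sq_nonneg ((m i : ℝ))
    exact sq_le_sq' (by linarith) (by linarith)
  -- bound on inorm x
  have hxn : inorm x ≤ T * (1 + M) ^ 2 := by
    have h1 : inorm x ≤ Real.sqrt (∑ i, (2 * M ^ 2 * (lam i)⁻¹) ^ 2) :=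
      Real.sqrt_le_sqrt (Finset.sum_le_sum fun i _ => hxi i)
    have h2 : ∑ i, (2 * M ^ 2 * (lam i)⁻¹) ^ 2
        = (2 * M ^ 2) ^ 2 * ∑ i, ((lam i)⁻¹) ^ 2 := by
      rw [Finset.mul_sum]
      exact Finset.sum_congr rfl fun i _ => by ring
    have h3 : Real.sqrt (∑ i, (2 * M ^ 2 * (lam i)⁻¹) ^ 2) = 2 * M ^ 2 * S := by
      rw [h2, Real.sqrt_mul (by positivity), Real.sqrt_sq (by positivity), hS]
    have h4 : 2 * M ^ 2 * S ≤ T * (1 + M) ^ 2 := by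
      rw [hT]
      nlinarith [sq_nonneg M, sq_nonneg (1 + M), mul_nonneg hS0 (sq_nonneg M)]
    rw [h3] at h1
    linarith
  -- diophantine estimate applied
  have hdx := hdio x hx0
  have hfact : |‖k‖ ^ 2 - ‖l‖ ^ 2| = |‖k‖ - ‖l‖| * (‖k‖ + ‖l‖) := by
    rw [show ‖k‖ ^ 2 - ‖l‖ ^ 2 = (‖k‖ - ‖l‖) * (‖k‖ + ‖l‖) by ring, abs_mul,
      abs_of_nonneg (show (0:ℝ) ≤ ‖k‖ + ‖l‖ by positivity)]
  have habs : |∑ i, lam i * ((x i : ℝ))| = |‖k‖ - ‖l‖| * (‖k‖ + ‖l‖) := by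
    rw [← hdiff, hfact]
  rw [habs] at hdx
  set D : ℝ := |‖k‖ - ‖l‖| with hDdef
  have hD : 0 < D := abs_pos.mpr (sub_ne_zero.mpr hne)
  have hPpos : (0:ℝ) < (T * (1 + M) ^ 2) ^ e := Real.rpow_pos_of_pos (by positivity) _
  have hipos : (0:ℝ) < (inorm x) ^ e := Real.rpow_pos_of_pos hix _
  have hmono : (inorm x) ^ e ≤ (T * (1 + M) ^ 2) ^ e :=
    Real.rpow_le_rpow (Real.sqrt_nonneg _) hxn he0.le
  have hCle : C ≤ D * (2 * (1 + M)) * (T * (1 + M) ^ 2) ^ e := by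
    rw [div_le_iff₀ hipos] at hdx
    calc C ≤ D * (‖k‖ + ‖l‖) * (inorm x) ^ e := hdx
      _ ≤ D * (2 * (1 + M)) * (T * (1 + M) ^ 2) ^ e := by
          have h6 : ‖k‖ + ‖l‖ ≤ 2 * (1 + M) := by linarith
          gcongr
  have hTP : (T * (1 + M) ^ 2) ^ e = T ^ e * ((1 + M) ^ 2) ^ e :=
    Real.mul_rpow hT0.le (by positivity)
  have hpow : (1 + M) ^ (2 * (N:ℝ) + 2 * τ - 1) = ((1 + M) ^ 2) ^ e * (1 + M) := by
    have h1 : ((1 + M):ℝ) ^ (2:ℕ) = (1 + M) ^ ((2:ℕ):ℝ) := (Real.rpow_natCast _ 2).symm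
    rw [h1, ← Real.rpow_mul h0M.le]
    rw [show ((2:ℕ):ℝ) * e = 2*(N:ℝ) + 2*τ - 2 by rw [he]; push_cast; ring]
    rw [show 2*(N:ℝ)+2*τ-1 = (2*(N:ℝ)+2*τ-2) + 1 by ring, Real.rpow_add h0M,
      Real.rpow_one]
  rw [div_le_iff₀ hD, hpow]
  have h5 : (1:ℝ) ≤ D * (2 * (1 + M)) * (T ^ e * ((1 + M) ^ 2) ^ e) / C := by
    rw [le_div_iff₀ hC, one_mul, ← hTP]
    exact hCle
  calc (1:ℝ) ≤ D * (2 * (1 + M)) * (T ^ e * ((1 + M) ^ 2) ^ e) / C := h5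
    _ = 2 * T ^ e / C * (((1 + M) ^ 2) ^ e * (1 + M)) * D := by ring
end

section
/- Combining the above: for any a ∈ ℝ^N_+ and any nonzero k, l, m in Λ = (ℤ/a_1)×⋯×(ℤ/a_N) with k+l=m, |k|,|l|,|m| ≤ M, and |k|+|l| ≠ |m|, one has 1/(|k|+|l|-|m|) ≤ C(1+M)^5 with C depending only on a and N. -/
/-!
Write `m = k + l`. Then `(|k| + |l| - |m|) (|k| + |l| + |m|) = 2 (|k| |l| - ⟪k, l⟫)`, so it
suffices to bound `D = |k| |l| - ⟪k, l⟫` from below. Its product with `|k| |l| + ⟪k, l⟫` is the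
Gram determinant, which by Lagrange's identity is a sum of squares of the minors
`k i * l j - k j * l i`, each an integer divided by `a i * a j`. So either the Gram determinant
vanishes, `k` and `l` are antiparallel and `D = 2 |k| |l|` is bounded below because nonzero
lattice points have length at least `1 / max a`; or the Gram determinant is at least
`1 / (2 (max a) ^ 4)`. Either way `1 ≤ 4 (max a) ^ 4 |k| |l| D`, which gives
`1 / (|k| + |l| - |m|) ≤ 6 (max a) ^ 4 M ^ 3`.
-/

open Finset RealInnerProductSpace

lemma one_le_mul_abs_intCast_div {n : ℤ} {b A : ℝ} (hn : n ≠ 0) (hb : 0 < b) (hbA : b ≤ A) :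
    1 ≤ A * |n / b| := by
  have hn1 : (1 : ℝ) ≤ |(n : ℝ)| := by exact_mod_cast Int.one_le_abs hn
  rw [abs_div, abs_of_pos hb, mul_div_assoc', le_div_iff₀ hb]
  nlinarith

lemma norm_add_norm_sub_norm_add_mul_add {E : Type*} [NormedAddCommGroup E]
    [InnerProductSpace ℝ E] (x y : E) :
    (‖x‖ + ‖y‖ - ‖x + y‖) * (‖x‖ + ‖y‖ + ‖x + y‖) = 2 * (‖x‖ * ‖y‖ - ⟪x, y⟫) := by
  have := norm_add_sq_real x y
  linear_combination -this

lemma EuclideanSpace.sum_sum_sq_sub_mul {ι : Type*} [Fintype ι] (x y : EuclideanSpace ℝ ι) :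
    ∑ i, ∑ j, (x i * y j - x j * y i) ^ 2 = 2 * (‖x‖ ^ 2 * ‖y‖ ^ 2 - ⟪x, y⟫ ^ 2) := by
  have hx : ‖x‖ ^ 2 = ∑ i, x i ^ 2 := by simp [EuclideanSpace.norm_sq_eq]
  have hy : ‖y‖ ^ 2 = ∑ i, y i ^ 2 := by simp [EuclideanSpace.norm_sq_eq]
  have hxy : ⟪x, y⟫ = ∑ i, x i * y i := by simp [PiLp.inner_apply, mul_comm]
  have h : ∀ i j, (x i * y j - x j * y i) ^ 2
      = x i ^ 2 * y j ^ 2 + y i ^ 2 * x j ^ 2 - 2 * ((x i * y i) * (x j * y j)) := by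
    intro i j; ring
  simp only [hx, hy, hxy, h, sum_add_distrib, sum_sub_distrib, ← mul_sum, ← sum_mul, sq]
  ring

def IsLatticePoint {ι : Type*} (a : ι → ℝ) (x : EuclideanSpace ℝ ι) : Prop :=
  ∀ i, ∃ n : ℤ, x i = n / a i

namespace IsLatticePoint

variable {ι : Type*} {a : ι → ℝ} {A : ℝ}

lemma one_le_mul_norm [Fintype ι] (ha : ∀ i, 0 < a i) (haA : ∀ i, a i ≤ A)
    {x : EuclideanSpace ℝ ι} (hx : IsLatticePoint a x) (hx0 : x ≠ 0) : 1 ≤ A * ‖x‖ := by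
  obtain ⟨i, hi⟩ : ∃ i, x i ≠ 0 := by
    by_contra! h
    exact hx0 (PiLp.ext h)
  obtain ⟨n, hn⟩ := hx i
  have hn0 : n ≠ 0 := by rintro rfl; simp_all
  calc 1 ≤ A * |x i| := hn ▸ one_le_mul_abs_intCast_div hn0 (ha i) (haA i)
    _ ≤ A * ‖x‖ := by
      gcongr
      · exact (ha i).le.trans (haA i)
      · exact PiLp.norm_apply_le x i

lemma one_le_mul_abs_sub_mul (ha : ∀ i, 0 < a i) (haA : ∀ i, a i ≤ A)
    {x y : EuclideanSpace ℝ ι} (hx : IsLatticePoint a x) (hy : IsLatticePoint a y) {i j : ι}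
    (hij : x i * y j - x j * y i ≠ 0) :
    1 ≤ A ^ 2 * |x i * y j - x j * y i| := by
  obtain ⟨⟨p, hp⟩, ⟨p', hp'⟩⟩ := And.intro (hx i) (hx j)
  obtain ⟨⟨q, hq⟩, ⟨q', hq'⟩⟩ := And.intro (hy j) (hy i)
  have hai := ha i
  have haj := ha j
  have hcross : x i * y j - x j * y i = ((p * q - p' * q' : ℤ) : ℝ) / (a i * a j) := by
    rw [hp, hp', hq, hq']
    push_cast
    field_simp
  rw [hcross] at hij ⊢
  refine one_le_mul_abs_intCast_div ?_ (mul_pos hai haj) ?_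
  · rintro h; simp [h] at hij
  · rw [sq]; exact mul_le_mul (haA i) (haA j) haj.le (hai.le.trans (haA i))

lemma one_le_mul_gram [Fintype ι] (ha : ∀ i, 0 < a i) (haA : ∀ i, a i ≤ A)
    {x y : EuclideanSpace ℝ ι} (hx : IsLatticePoint a x) (hy : IsLatticePoint a y)
    (hgram : ‖x‖ ^ 2 * ‖y‖ ^ 2 - ⟪x, y⟫ ^ 2 ≠ 0) :
    1 ≤ 2 * A ^ 4 * (‖x‖ ^ 2 * ‖y‖ ^ 2 - ⟪x, y⟫ ^ 2) := by
  have hsum := EuclideanSpace.sum_sum_sq_sub_mul x y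
  have hsum_ne : ∑ i, ∑ j, (x i * y j - x j * y i) ^ 2 ≠ 0 := by
    rw [hsum]; exact mul_ne_zero two_ne_zero hgram
  obtain ⟨i, -, hi⟩ := exists_ne_zero_of_sum_ne_zero hsum_ne
  obtain ⟨j, -, hij⟩ := exists_ne_zero_of_sum_ne_zero hi
  have h1 := hx.one_le_mul_abs_sub_mul ha haA hy (pow_ne_zero_iff two_ne_zero |>.mp hij)
  have hle : (x i * y j - x j * y i) ^ 2 ≤ ∑ i, ∑ j, (x i * y j - x j * y i) ^ 2 :=
    (single_le_sum (f := fun j => (x i * y j - x j * y i) ^ 2) (fun _ _ => sq_nonneg _)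
      (mem_univ j)).trans
    (single_le_sum (f := fun i => ∑ j, (x i * y j - x j * y i) ^ 2)
      (fun _ _ => sum_nonneg fun _ _ => sq_nonneg _) (mem_univ i))
  calc (1 : ℝ) ≤ (A ^ 2 * |x i * y j - x j * y i|) ^ 2 := one_le_pow₀ h1
    _ = A ^ 4 * (x i * y j - x j * y i) ^ 2 := by rw [mul_pow, sq_abs]; ring
    _ ≤ A ^ 4 * ∑ i, ∑ j, (x i * y j - x j * y i) ^ 2 := by gcongr
    _ = _ := by rw [hsum]; ring

lemma one_le_mul_norm_mul_norm_sub_inner [Fintype ι] (ha : ∀ i, 0 < a i)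
    (haA : ∀ i, a i ≤ A) {x y : EuclideanSpace ℝ ι} (hx : IsLatticePoint a x)
    (hy : IsLatticePoint a y) (hx0 : x ≠ 0) (hy0 : y ≠ 0)
    (hD : 0 < ‖x‖ * ‖y‖ - ⟪x, y⟫) :
    1 ≤ 4 * A ^ 4 * (‖x‖ * ‖y‖) * (‖x‖ * ‖y‖ - ⟪x, y⟫) := by
  have hCS : ⟪x, y⟫ ≤ ‖x‖ * ‖y‖ := real_inner_le_norm x y
  have hfactor : (‖x‖ * ‖y‖ - ⟪x, y⟫) * (‖x‖ * ‖y‖ + ⟪x, y⟫)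
      = ‖x‖ ^ 2 * ‖y‖ ^ 2 - ⟪x, y⟫ ^ 2 := by ring
  by_cases hgram : ‖x‖ ^ 2 * ‖y‖ ^ 2 - ⟪x, y⟫ ^ 2 = 0
  · have hanti : ⟪x, y⟫ = -(‖x‖ * ‖y‖) := by
      rw [hgram] at hfactor
      linarith [(mul_eq_zero.mp hfactor).resolve_left hD.ne']
    have h1 := hx.one_le_mul_norm ha haA hx0
    have h2 := hy.one_le_mul_norm ha haA hy0
    rw [hanti]
    nlinarith [mul_le_mul h1 h2 zero_le_one (by linarith)]
  · have h := hx.one_le_mul_gram ha haA hy hgram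
    nlinarith [mul_le_mul_of_nonneg_left (by linarith : ‖x‖ * ‖y‖ + ⟪x, y⟫ ≤ 2 * (‖x‖ * ‖y‖))
      hD.le, pow_nonneg (sq_nonneg A) 2]

end IsLatticePoint

/-- Refined 3-wave small divisor estimate: for any aspect ratios `a ∈ ℝ^N_+` there is
`C > 0` (depending only on `a` and `N`) such that for all `M` and all nonzero lattice
points `k, l, m ∈ (ℤ/a_1)×⋯×(ℤ/a_N)` with `k + l = m`, `|k|, |l|, |m| ≤ M` and
`|k| + |l| ≠ |m|`, one has `0 < |k| + |l| - |m|` and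
`1/(|k|+|l|-|m|) ≤ C (1+M)^5`. -/
theorem stmt_12 (N : ℕ) (a : Fin N → ℝ) (ha : ∀ i, 0 < a i) :
    ∃ C > 0, ∀ (M : ℝ) (k l m : EuclideanSpace ℝ (Fin N)),
      (∀ i, ∃ n : ℤ, k i = n / a i) → (∀ i, ∃ n : ℤ, l i = n / a i) →
      (∀ i, ∃ n : ℤ, m i = n / a i) →
      k ≠ 0 → l ≠ 0 → m ≠ 0 → k + l = m →
      ‖k‖ ≤ M → ‖l‖ ≤ M → ‖m‖ ≤ M → ‖k‖ + ‖l‖ ≠ ‖m‖ →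
      0 < ‖k‖ + ‖l‖ - ‖m‖ ∧ 1 / (‖k‖ + ‖l‖ - ‖m‖) ≤ C * (1 + M) ^ 5 := by
  obtain ⟨A₀, hA₀⟩ := Finite.exists_le a
  set A := max 1 A₀
  have haA : ∀ i, a i ≤ A := fun i => (hA₀ i).trans (le_max_right _ _)
  refine ⟨6 * A ^ 4, by positivity, ?_⟩
  rintro M k l m hk hl - hk0 hl0 - rfl hkM hlM hmM hne
  have hδ : 0 < ‖k‖ + ‖l‖ - ‖k + l‖ :=
    sub_pos.mpr ((norm_add_le k l).lt_of_ne (Ne.symm hne))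
  have hkl := norm_add_norm_sub_norm_add_mul_add k l
  have hD : 0 < ‖k‖ * ‖l‖ - ⟪k, l⟫ := by nlinarith [norm_nonneg (k + l)]
  have h1 := IsLatticePoint.one_le_mul_norm_mul_norm_sub_inner ha haA hk hl hk0 hl0 hD
  have hM : 0 ≤ M := (norm_nonneg k).trans hkM
  have hkl_le : ‖k‖ * ‖l‖ ≤ M ^ 2 := by
    rw [sq]; exact mul_le_mul hkM hlM (norm_nonneg l) hM
  have hM3 : M ^ 3 ≤ (1 + M) ^ 5 :=
    (pow_le_pow_left₀ hM (by linarith) 3).trans (pow_le_pow_right₀ (by linarith) (by norm_num))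
  refine ⟨hδ, ?_⟩
  rw [div_le_iff₀ hδ]
  calc 1 ≤ 4 * A ^ 4 * (‖k‖ * ‖l‖) * (‖k‖ * ‖l‖ - ⟪k, l⟫) := h1
    _ = 2 * A ^ 4 * (‖k‖ * ‖l‖) * ((‖k‖ + ‖l‖ - ‖k + l‖) * (‖k‖ + ‖l‖ + ‖k + l‖)) := by
      rw [hkl]; ring
    _ ≤ 2 * A ^ 4 * M ^ 2 * ((‖k‖ + ‖l‖ - ‖k + l‖) * (3 * M)) := by gcongr; linarith
    _ = 6 * A ^ 4 * M ^ 3 * (‖k‖ + ‖l‖ - ‖k + l‖) := by ring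
    _ ≤ 6 * A ^ 4 * (1 + M) ^ 5 * (‖k‖ + ‖l‖ - ‖k + l‖) := by gcongr
end

section
/- Let p_ρ, p_θ, e_θ, ρ°, θ°, c° be real constants with ρ°, θ°, p_ρ, e_θ > 0 and c° = sqrt(p_ρ + θ°·p_θ²/((ρ°)²·e_θ)). For a function φ_ν on the torus satisfying -Δφ_ν = ν²φ_ν with ν > 0, the vector field U± = (±i ρ° φ_ν, (c°/ν)∇φ_ν, ±i (θ° p_θ/(ρ° e_θ)) φ_ν) satisfies 𝒜 U± = ±i c° ν U±, where 𝒜(ρ̃, ũ, θ̃) = (ρ°∇·ũ, (p_ρ/ρ°)∇ρ̃ + (p_θ/ρ°)∇θ̃, (θ° p_θ/(ρ° e_θ))∇·ũ). -/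
/-!
Differentiation commutes with constant complex multiples of real functions, so the divergence
of `ũ = (c°/ν) ∇φ` is `(c°/ν) Δφ = -c° ν φ`; with `(± i)² = -1` this gives the density and
temperature components. The velocity component reduces to `c°² = p_ρ + θ° p_θ² / ((ρ°)² e_θ)`.
-/

open Complex

/-- Partial derivative `∂_j f` of a complex-valued function on `ℝ^N`. -/
noncomputable def pd {N : ℕ} (f : EuclideanSpace ℝ (Fin N) → ℂ) (j : Fin N)
    (x : EuclideanSpace ℝ (Fin N)) : ℂ :=
  fderiv ℝ f x (EuclideanSpace.single j 1)

/-- Partial derivative `∂_j f` of a real-valued function on `ℝ^N`. -/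
noncomputable def pdR {N : ℕ} (f : EuclideanSpace ℝ (Fin N) → ℝ) (j : Fin N)
    (x : EuclideanSpace ℝ (Fin N)) : ℝ :=
  fderiv ℝ f x (EuclideanSpace.single j 1)

lemma pd_const_mul_ofReal {N : ℕ} {f : EuclideanSpace ℝ (Fin N) → ℝ}
    {x : EuclideanSpace ℝ (Fin N)} (hf : DifferentiableAt ℝ f x) (a : ℂ) (j : Fin N) :
    pd (fun y => a * (f y : ℂ)) j x = a * (pdR f j x : ℂ) := by
  have hfc : HasFDerivAt (fun y => (f y : ℂ)) (ofRealCLM.comp (fderiv ℝ f x)) x :=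
    ofRealCLM.hasFDerivAt.comp x hf.hasFDerivAt
  simp [pd, pdR, (hfc.const_mul a).fderiv]

theorem ContDiff.differentiable_pdR {N : ℕ} {f : EuclideanSpace ℝ (Fin N) → ℝ}
    (hf : ContDiff ℝ 2 f) (j : Fin N) : Differentiable ℝ (pdR f j) :=
  ((hf.fderiv_right (m := 1) (by norm_num)).clm_apply contDiff_const).differentiable one_ne_zero

lemma sum_pd_const_mul_pdR {N : ℕ} {f : EuclideanSpace ℝ (Fin N) → ℝ} (hf : ContDiff ℝ 2 f)
    (a : ℂ) (x : EuclideanSpace ℝ (Fin N)) :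
    ∑ j, pd (fun y => a * (pdR f j y : ℂ)) j x = a * ((∑ j, pdR (pdR f j) j x : ℝ) : ℂ) := by
  simp only [fun j => pd_const_mul_ofReal (hf.differentiable_pdR j x) a j, ofReal_sum,
    Finset.mul_sum]

lemma ofReal_mul_I_sq {ε : ℝ} (hε : ε = 1 ∨ ε = -1) : ((ε : ℂ) * I) ^ 2 = -1 := by
  rcases hε with rfl | rfl <;> simp

/-- If `-Δφ = ν²φ` with `ν > 0`, then the field
`U± = (± i ρ° φ, (c°/ν) ∇φ, ± i (θ° p_θ/(ρ° e_θ)) φ)` is an eigenvector of the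
acoustic operator `𝒜(ρ̃, ũ, θ̃) = (ρ° ∇·ũ, (p_ρ/ρ°)∇ρ̃ + (p_θ/ρ°)∇θ̃,
(θ° p_θ/(ρ° e_θ)) ∇·ũ)` with eigenvalue `± i c° ν`, where
`c° = √(p_ρ + θ° p_θ²/((ρ°)² e_θ))` is the sound speed. -/
theorem stmt_14 (N : ℕ) (pρ pθ eθ ρ θ c ν : ℝ)
    (hρ : 0 < ρ) (hθ : 0 < θ) (hpρ : 0 < pρ) (heθ : 0 < eθ) (hν : 0 < ν)
    (hc : c = Real.sqrt (pρ + θ * pθ ^ 2 / (ρ ^ 2 * eθ)))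
    (ε : ℝ) (hε : ε = 1 ∨ ε = -1)
    (φ : EuclideanSpace ℝ (Fin N) → ℝ) (hφ : ContDiff ℝ 2 φ)
    (hlap : ∀ x, (∑ j, pdR (pdR φ j) j x) = -(ν ^ 2) * φ x)
    (ρt θt : EuclideanSpace ℝ (Fin N) → ℂ)
    (u : Fin N → EuclideanSpace ℝ (Fin N) → ℂ)
    (hρt : ∀ x, ρt x = (ε : ℂ) * I * (ρ : ℂ) * (φ x : ℂ))
    (hθt : ∀ x, θt x = (ε : ℂ) * I * ((θ * pθ / (ρ * eθ) : ℝ) : ℂ) * (φ x : ℂ))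
    (hu : ∀ j x, u j x = ((c / ν : ℝ) : ℂ) * (pdR φ j x : ℂ)) :
    (∀ x, (ρ : ℂ) * ∑ j, pd (u j) j x = ((ε : ℂ) * I * (c : ℂ) * (ν : ℂ)) * ρt x) ∧
    (∀ j x, ((pρ / ρ : ℝ) : ℂ) * pd ρt j x + ((pθ / ρ : ℝ) : ℂ) * pd θt j x
      = ((ε : ℂ) * I * (c : ℂ) * (ν : ℂ)) * u j x) ∧
    (∀ x, ((θ * pθ / (ρ * eθ) : ℝ) : ℂ) * ∑ j, pd (u j) j x
      = ((ε : ℂ) * I * (c : ℂ) * (ν : ℂ)) * θt x) := by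
  obtain rfl : ρt = fun y => ((ε : ℂ) * I * (ρ : ℂ)) * (φ y : ℂ) := funext hρt
  obtain rfl : θt = fun y => ((ε : ℂ) * I * ((θ * pθ / (ρ * eθ) : ℝ) : ℂ)) * (φ y : ℂ) :=
    funext hθt
  obtain rfl : u = fun j y => ((c / ν : ℝ) : ℂ) * (pdR φ j y : ℂ) := funext₂ hu
  have hεI := ofReal_mul_I_sq hε
  have hc2 : c ^ 2 = pρ + θ * pθ ^ 2 / (ρ ^ 2 * eθ) := by
    rw [hc, Real.sq_sqrt (by positivity)]
  have hν0 : (ν : ℂ) ≠ 0 := by exact_mod_cast hν.ne'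
  have hdiv (x) : ∑ j, pd (fun y => ((c / ν : ℝ) : ℂ) * (pdR φ j y : ℂ)) j x
      = -((c : ℂ) * ν) * φ x := by
    rw [sum_pd_const_mul_pdR hφ, hlap]
    push_cast
    field_simp
  refine ⟨fun x => ?_, fun j x => ?_, fun x => ?_⟩
  · rw [hdiv]
    linear_combination (-(c : ℂ) * ν * ρ * φ x) * hεI
  · have hφx := hφ.differentiable (by norm_num) x
    rw [pd_const_mul_ofReal hφx, pd_const_mul_ofReal hφx]
    have hρ0 : (ρ : ℂ) ≠ 0 := by exact_mod_cast hρ.ne'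
    have heθ0 : (eθ : ℂ) ≠ 0 := by exact_mod_cast heθ.ne'
    calc _ = (ε : ℂ) * I * ((pρ + θ * pθ ^ 2 / (ρ ^ 2 * eθ) : ℝ) : ℂ) * pdR φ j x := by
          push_cast
          field_simp
      _ = _ := by
          rw [← hc2]
          push_cast
          field_simp
  · rw [hdiv]
    linear_combination (-(c : ℂ) * ν * (θ * pθ / (ρ * eθ) : ℝ) * φ x) * hεI
end

section
/- Let Q_3r(V,V) = Σ_{γ,m} Σ_{k+l=m, resonant} χ^γ_m V^γ_k V^γ_l H^γ_m with χ^γ_m = i C γ sg(m)|m| for a real constant C, where the sum is over resonant triples (sg(k)|k| + sg(l)|l| = sg(m)|m|, k+l=m) and V^γ_{-k} = conj(V^γ_k), H^γ_{-k} = conj(H^γ_k) with the H^γ_k orthonormal in a Hilbert space ℍ. Then ⟨Q_3r(V,V), V⟩_ℍ = 0. -/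
open scoped Classical

/-- Generalized sign of a nonzero integer vector: `1` if the first nonzero
component is positive, `-1` otherwise (and `1` at `0` by convention). -/
noncomputable def sgZ {N : ℕ} (k : Fin N → ℤ) : ℝ :=
  if h : (Finset.univ.filter fun i => k i ≠ 0).Nonempty then
    (if 0 < k ((Finset.univ.filter fun i => k i ≠ 0).min' h) then 1 else -1)
  else 1

/-- Euclidean norm of a point `k` of the lattice `(ℤ/a_1)×⋯×(ℤ/a_N)`. -/
noncomputable def anorm {N : ℕ} (a : Fin N → ℝ) (k : Fin N → ℤ) : ℝ :=
  Real.sqrt (∑ i, ((k i : ℝ) / a i) ^ 2)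

lemma anorm_neg {N : ℕ} (a : Fin N → ℝ) (k : Fin N → ℤ) : anorm a (-k) = anorm a k := by
  unfold anorm
  congr 1
  apply Finset.sum_congr rfl
  intro i _
  simp [neg_div]

lemma sgZ_neg {N : ℕ} {k : Fin N → ℤ} (hk : k ≠ 0) : sgZ (-k) = - sgZ k := by
  have hset : (Finset.univ.filter fun i => (-k) i ≠ 0) = (Finset.univ.filter fun i => k i ≠ 0) := by
    apply Finset.filter_congr
    intro i _
    simp
  have hne : (Finset.univ.filter fun i => k i ≠ 0).Nonempty := by
    rcases Function.ne_iff.mp hk with ⟨i, hi⟩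
    exact ⟨i, by simpa using hi⟩
  have hne' : (Finset.univ.filter fun i => (-k) i ≠ 0).Nonempty := by rw [hset]; exact hne
  unfold sgZ
  rw [dif_pos hne', dif_pos hne]
  have hmin : (Finset.univ.filter fun i => (-k) i ≠ 0).min' hne' =
      (Finset.univ.filter fun i => k i ≠ 0).min' hne := by
    congr 1
  set j := (Finset.univ.filter fun i => k i ≠ 0).min' hne with hj
  have hjk : k j ≠ 0 := by
    have := Finset.min'_mem _ hne
    simpa using this
  rw [hmin]
  rcases lt_or_gt_of_ne hjk with h | h
  · rw [if_pos (by simpa using h), if_neg (not_lt.mpr h.le)]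
    ring
  · rw [if_neg (by simpa using not_lt.mpr h.le), if_pos h]

/-- Cancellation of the 3-wave resonant quadratic form: with
`χ^γ_m = i C γ sg(m)|m|` and coefficients satisfying the reality condition
`V_{-k} = conj(V_k)`, the coefficient expression of `⟨Q_{3r}(V,V), V⟩_ℍ`
(the `H^γ_k` being orthonormal in `ℍ`), namely the sum over resonant triples
`k + l = m`, `sg(k)|k| + sg(l)|l| = sg(m)|m|` of `χ^γ_m V_k V_l conj(V_m)`,
vanishes. -/
theorem stmt_16 (N : ℕ) (a : Fin N → ℝ) (ha : ∀ i, 0 < a i)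
    (C γ : ℝ) (hγ : γ = 1 ∨ γ = -1)
    (V : (Fin N → ℤ) → ℂ)
    (hfin : (Function.support V).Finite)
    (hsym : ∀ k, V (-k) = (starRingEnd ℂ) (V k)) :
    (∑ᶠ m : Fin N → ℤ, ∑ᶠ k : Fin N → ℤ,
      (if m ≠ 0 ∧ k ≠ 0 ∧ m - k ≠ 0 ∧
          sgZ k * anorm a k + sgZ (m - k) * anorm a (m - k) = sgZ m * anorm a m
        then (Complex.I * (C : ℂ) * (γ : ℂ) * ((sgZ m : ℝ) : ℂ) * ((anorm a m : ℝ) : ℂ)) *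
          V k * V (m - k) * (starRingEnd ℂ) (V m)
        else 0)) = 0 := by
  set g : (Fin N → ℤ) → (Fin N → ℤ) → ℂ := fun m k =>
    (if m ≠ 0 ∧ k ≠ 0 ∧ m - k ≠ 0 ∧
        sgZ k * anorm a k + sgZ (m - k) * anorm a (m - k) = sgZ m * anorm a m
      then (Complex.I * (C : ℂ) * (γ : ℂ) * ((sgZ m : ℝ) : ℂ) * ((anorm a m : ℝ) : ℂ)) *
        V k * V (m - k) * (starRingEnd ℂ) (V m)
      else 0) with hg
  set T : (Fin N → ℤ) × (Fin N → ℤ) → ℂ := fun p => g p.1 p.2 with hT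
  -- basic facts on vanishing
  have hgV : ∀ m k, g m k ≠ 0 → V m ≠ 0 ∧ V k ≠ 0 := by
    intro m k h
    simp only [hg] at h
    by_cases hc : (m ≠ 0 ∧ k ≠ 0 ∧ m - k ≠ 0 ∧
        sgZ k * anorm a k + sgZ (m - k) * anorm a (m - k) = sgZ m * anorm a m)
    · rw [if_pos hc] at h
      constructor
      · intro hV; apply h; simp [hV]
      · intro hV; apply h; simp [hV]
    · rw [if_neg hc] at h; exact absurd rfl h
  set s := hfin.toFinset with hs
  -- turn the double finsum into a finsum over pairs
  have step1 : (∑ᶠ m : (Fin N → ℤ), ∑ᶠ k : (Fin N → ℤ), g m k) = ∑ᶠ p : (Fin N → ℤ) × (Fin N → ℤ), T p := by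
    have inner : ∀ m : (Fin N → ℤ), (∑ᶠ k : (Fin N → ℤ), g m k) = ∑ k ∈ s, g m k := by
      intro m
      apply finsum_eq_finset_sum_of_support_subset
      intro k hk
      rw [hs, Set.Finite.coe_toFinset]
      exact (hgV m k hk).2
    have outer : (∑ᶠ m : (Fin N → ℤ), ∑ᶠ k : (Fin N → ℤ), g m k) = ∑ m ∈ s, ∑ k ∈ s, g m k := by
      rw [funext inner]
      apply finsum_eq_finset_sum_of_support_subset
      intro m hm
      rw [hs, Set.Finite.coe_toFinset]
      rcases Finset.exists_ne_zero_of_sum_ne_zero hm with ⟨k, _, hk⟩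
      exact (hgV m k hk).1
    rw [outer, ← Finset.sum_product']
    symm
    apply finsum_eq_finset_sum_of_support_subset
    intro p hp
    have := hgV p.1 p.2 hp
    simp only [Finset.coe_product, Set.mem_prod, hs, Set.Finite.coe_toFinset]
    exact this
  rw [step1]
  -- the rotation equiv
  set σ : (Fin N → ℤ) × (Fin N → ℤ) ≃ (Fin N → ℤ) × (Fin N → ℤ) :=
    { toFun := fun p => (-p.2, p.1 - p.2)
      invFun := fun p => (p.2 - p.1, -p.1)
      left_inv := by intro p; simp
      right_inv := by intro p; simp } with hσ
  -- the condition is invariant under σ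
  have key : ∀ p : (Fin N → ℤ) × (Fin N → ℤ),
      ((σ p).1 ≠ 0 ∧ (σ p).2 ≠ 0 ∧ (σ p).1 - (σ p).2 ≠ 0 ∧
        sgZ (σ p).2 * anorm a (σ p).2 + sgZ ((σ p).1 - (σ p).2) * anorm a ((σ p).1 - (σ p).2)
          = sgZ (σ p).1 * anorm a (σ p).1)
      ↔ (p.1 ≠ 0 ∧ p.2 ≠ 0 ∧ p.1 - p.2 ≠ 0 ∧
        sgZ p.2 * anorm a p.2 + sgZ (p.1 - p.2) * anorm a (p.1 - p.2)
          = sgZ p.1 * anorm a p.1) := by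
    rintro ⟨m, k⟩
    have e1 : -k - (m - k) = -m := by abel
    simp only [hσ, Equiv.coe_fn_mk, e1, neg_ne_zero]
    constructor
    · rintro ⟨hk, hmk, hm, hres⟩
      rw [sgZ_neg hm, anorm_neg, sgZ_neg hk, anorm_neg] at hres
      exact ⟨hm, hk, hmk, by linarith⟩
    · rintro ⟨hm, hk, hmk, hres⟩
      rw [sgZ_neg hm, anorm_neg, sgZ_neg hk, anorm_neg]
      exact ⟨hk, hmk, hm, by linarith⟩
  -- pointwise cancellation of the three rotations
  have cancel : ∀ p : (Fin N → ℤ) × (Fin N → ℤ), T p + T (σ p) + T (σ (σ p)) = 0 := by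
    rintro ⟨m, k⟩
    by_cases hc : (m ≠ 0 ∧ k ≠ 0 ∧ m - k ≠ 0 ∧
        sgZ k * anorm a k + sgZ (m - k) * anorm a (m - k) = sgZ m * anorm a m)
    · obtain ⟨hm, hk, hmk, hres⟩ := hc
      have hc2 := (key (m, k)).mpr ⟨hm, hk, hmk, hres⟩
      have hc3 := (key (σ (m, k))).mpr hc2
      have e1 : -k - (m - k) = -m := by abel
      have e2 : (σ (σ (m, k))) = (k - m, -m) := by
        simp only [hσ, Equiv.coe_fn_mk, Prod.mk.injEq]
        constructor <;> abel
      have e3 : k - m - -m = k := by abel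
      have e4 : (k : Fin N → ℤ) - m = -(m - k) := by abel
      have hT1 : T (m, k) =
          (Complex.I * (C : ℂ) * (γ : ℂ) * ((sgZ m : ℝ) : ℂ) * ((anorm a m : ℝ) : ℂ)) *
            V k * V (m - k) * (starRingEnd ℂ) (V m) := by
        simp only [hT, hg]
        rw [if_pos ⟨hm, hk, hmk, hres⟩]
      have hT2 : T (σ (m, k)) =
          (Complex.I * (C : ℂ) * (γ : ℂ) * ((-(sgZ k) : ℝ) : ℂ) * ((anorm a k : ℝ) : ℂ)) *
            V (m - k) * (starRingEnd ℂ) (V m) * V k := by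
        simp only [hT, hg, hσ, Equiv.coe_fn_mk]
        rw [if_pos (by simpa only [hσ, Equiv.coe_fn_mk] using hc2)]
        rw [e1, sgZ_neg hk, anorm_neg, hsym m, hsym k, Complex.conj_conj]
      have hT3 : T (σ (σ (m, k))) =
          (Complex.I * (C : ℂ) * (γ : ℂ) * ((-(sgZ (m - k)) : ℝ) : ℂ) * ((anorm a (m - k) : ℝ) : ℂ)) *
            (starRingEnd ℂ) (V m) * V k * V (m - k) := by
        rw [e2] at hc3 ⊢
        simp only [hT, hg]
        rw [if_pos (by simpa only [e3] using hc3)]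
        rw [e3, e4, sgZ_neg hmk, anorm_neg, hsym m, hsym (m - k), Complex.conj_conj]
      rw [hT1, hT2, hT3]
      have hresC : ((sgZ k * anorm a k : ℝ) : ℂ) + ((sgZ (m - k) * anorm a (m - k) : ℝ) : ℂ)
          = ((sgZ m * anorm a m : ℝ) : ℂ) := by
        rw [← Complex.ofReal_add, hres]
      push_cast at hresC ⊢
      linear_combination
        (-(Complex.I * (C : ℂ) * (γ : ℂ) * V k * V (m - k) * (starRingEnd ℂ) (V m))) * hresC
    · have h1 : T (m, k) = 0 := by simp only [hT, hg]; rw [if_neg hc]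
      have h2 : T (σ (m, k)) = 0 := by
        simp only [hT, hg]
        rw [if_neg (fun h => hc ((key (m, k)).mp h))]
      have h3 : T (σ (σ (m, k))) = 0 := by
        simp only [hT, hg]
        rw [if_neg (fun h => hc ((key (m, k)).mp ((key (σ (m, k))).mp h)))]
      rw [h1, h2, h3]; ring
  -- finite supports
  have hTfin : (Function.support T).Finite := by
    apply Set.Finite.subset (hfin.prod hfin)
    intro p hp
    exact (hgV p.1 p.2 hp)
  have hTfin2 : (Function.support fun p => T (σ p)).Finite := by
    have : (Function.support fun p => T (σ p)) = σ ⁻¹' (Function.support T) := rfl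
    rw [this]
    exact Set.Finite.preimage (σ.injective.injOn) hTfin
  have hTfin3 : (Function.support fun p => T (σ (σ p))).Finite := by
    have : (Function.support fun p => T (σ (σ p))) = σ ⁻¹' (σ ⁻¹' (Function.support T)) := rfl
    rw [this]
    exact Set.Finite.preimage (σ.injective.injOn) (Set.Finite.preimage (σ.injective.injOn) hTfin)
  -- reindexing
  have r1 : (∑ᶠ p : (Fin N → ℤ) × (Fin N → ℤ), T (σ p)) = ∑ᶠ p : (Fin N → ℤ) × (Fin N → ℤ), T p := finsum_comp_equiv σ
  have r2 : (∑ᶠ p : (Fin N → ℤ) × (Fin N → ℤ), T (σ (σ p))) = ∑ᶠ p : (Fin N → ℤ) × (Fin N → ℤ), T p := by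
    rw [finsum_comp_equiv σ (f := fun p => T (σ p)), r1]
  have main : (∑ᶠ p : (Fin N → ℤ) × (Fin N → ℤ), T p) + (∑ᶠ p : (Fin N → ℤ) × (Fin N → ℤ), T p) + (∑ᶠ p : (Fin N → ℤ) × (Fin N → ℤ), T p) = 0 := by
    nth_rewrite 2 [← r1]
    nth_rewrite 2 [← r2]
    rw [← finsum_add_distrib hTfin hTfin2, ← finsum_add_distrib ((hTfin.union hTfin2).subset (Function.support_add _ _)) hTfin3]
    calc (∑ᶠ p : (Fin N → ℤ) × (Fin N → ℤ), (T p + T (σ p) + T (σ (σ p)))) = ∑ᶠ _p : (Fin N → ℤ) × (Fin N → ℤ), (0 : ℂ) := by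
          exact finsum_congr cancel
      _ = 0 := finsum_zero
  have := main
  set S := ∑ᶠ p : (Fin N → ℤ) × (Fin N → ℤ), T p
  have h3 : (3 : ℂ) * S = 0 := by linear_combination this
  have := mul_eq_zero.mp h3
  rcases this with h | h
  · norm_num at h
  · exact h
end
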